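/- arXiv:1501.04043 — 5 statements merged into one kernel-verified Lean document; each statement's English description precedes it below -/
import Mathlib

section
/- If f : A → A is a lattice endomorphism of a lattice (A, ∨, ∧) having a proper cycle, then f has at least two distinct fixed points. -/
/-! A lattice endomorphism permutes the elements of a cycle, so it fixes their join and their meet;
these differ because a proper cycle contains two distinct elements. -/

open Finset Function

namespace Finset

variable {ι A : Type*}

theorem inf'_lt_sup'_of_ne [Lattice A] {s : Finset ι} (hs : s.Nonempty) {x : ι → A} {i j : ι}
    (hi : i ∈ s) (hj : j ∈ s) (hij : x i ≠ x j) : s.inf' hs x < s.sup' hs x := by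
  refine lt_of_le_of_ne ((inf'_le x hi).trans (le_sup' x hi)) fun h => hij (le_antisymm ?_ ?_)
  · exact (le_sup' x hi).trans (h ▸ inf'_le x hj)
  · exact (le_sup' x hj).trans (h ▸ inf'_le x hi)

section Univ

variable [Fintype ι] [Nonempty ι]

theorem sup'_univ_comp_of_surjective [SemilatticeSup A] (x : ι → A) {σ : ι → ι}
    (hσ : Surjective σ) : univ.sup' univ_nonempty (x ∘ σ) = univ.sup' univ_nonempty x :=
  eq_of_forall_ge_iff fun c => by
    simpa only [sup'_le_iff, mem_univ, true_imp_iff, comp_apply] using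
      (hσ.forall (p := fun i => x i ≤ c)).symm

theorem inf'_univ_comp_of_surjective [SemilatticeInf A] (x : ι → A) {σ : ι → ι}
    (hσ : Surjective σ) : univ.inf' univ_nonempty (x ∘ σ) = univ.inf' univ_nonempty x :=
  eq_of_forall_le_iff fun c => by
    simpa only [le_inf'_iff, mem_univ, true_imp_iff, comp_apply] using
      (hσ.forall (p := fun i => c ≤ x i)).symm

theorem isFixedPt_sup'_univ [SemilatticeSup A] {f : A → A}
    (hf : ∀ a b, f (a ⊔ b) = f a ⊔ f b) {x : ι → A} {σ : ι → ι} (hσ : Surjective σ)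
    (hx : ∀ i, f (x i) = x (σ i)) : IsFixedPt f (univ.sup' univ_nonempty x) := by
  rw [IsFixedPt, apply_sup'_eq_sup'_comp _ f hf, show f ∘ x = x ∘ σ from funext hx,
    sup'_univ_comp_of_surjective x hσ]

theorem isFixedPt_inf'_univ [SemilatticeInf A] {f : A → A}
    (hf : ∀ a b, f (a ⊓ b) = f a ⊓ f b) {x : ι → A} {σ : ι → ι} (hσ : Surjective σ)
    (hx : ∀ i, f (x i) = x (σ i)) : IsFixedPt f (univ.inf' univ_nonempty x) := by
  rw [IsFixedPt, apply_inf'_eq_inf'_comp _ f hf, show f ∘ x = x ∘ σ from funext hx,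
    inf'_univ_comp_of_surjective x hσ]

end Univ

end Finset

theorem stmt1 {A : Type*} [Lattice A] (f : A → A)
    (hsup : ∀ x y : A, f (x ⊔ y) = f x ⊔ f y)
    (hinf : ∀ x y : A, f (x ⊓ y) = f x ⊓ f y)
    (n : ℕ) (hn : 2 ≤ n) (x : Fin n → A) (hinj : Function.Injective x)
    (hcyc : ∀ i : Fin n, f (x i) = x (i + ⟨1, by omega⟩)) :
    ∃ p q : A, p ≠ q ∧ f p = p ∧ f q = q := by
  have : NeZero n := ⟨by omega⟩
  have hshift : Surjective fun i : Fin n => i + ⟨1, by omega⟩ :=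
    (Equiv.addRight (⟨1, by omega⟩ : Fin n)).surjective
  have hx01 : x ⟨0, by omega⟩ ≠ x ⟨1, by omega⟩ := hinj.ne (by simp)
  exact ⟨_, _, (inf'_lt_sup'_of_ne univ_nonempty (mem_univ _) (mem_univ _) hx01).ne',
    isFixedPt_sup'_univ hsup hshift hcyc, isFixedPt_inf'_univ hinf hshift hcyc⟩
end

section
/- Let r be a partial order on A and f : A → A order-preserving with respect to r. If (x, y) is an f-prohibited pair, then x and y are incomparable with respect to r. -/
/-- A pair `(x, y)` is `f`-prohibited. -/
def FProhibited {A : Type*} (f : A → A) (x y : A) : Prop :=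
  ∃ k l n : ℕ, 2 ≤ n ∧ ¬ ((n : ℤ) ∣ (k : ℤ) - (l : ℤ)) ∧
    (Function.Injective fun i : Fin n => f^[k + (i : ℕ)] x) ∧
    f^[k + n] x = f^[k] x ∧ f^[k] x = f^[l] y

/-!
The point `c = f^[k] x = f^[l] y` lies on a cycle of exact length `n`. For a monotone map, a
periodic point `u` with `u ≤ f^[d] u` is fixed by `f^[d]`: the chain `u ≤ f^[d] u ≤ f^[2d] u ≤ ⋯`
returns to `u` after `n` steps. Hence two comparable points `f^[a] c ≤ f^[b] c` of the cycle
coincide, i.e. `a ≡ b [MOD n]`. If `x` and `y` were comparable, applying `f^[k + l]` would make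
`f^[l] c` and `f^[k] c` comparable, forcing `k ≡ l [MOD n]`.
-/

open Function

namespace Function

theorem minimalPeriod_eq_of_injective {α : Type*} {f : α → α} {x : α} {n : ℕ}
    (hx : IsPeriodicPt f n x) (hn : 0 < n) (hinj : Injective fun i : Fin n => f^[i] x) :
    minimalPeriod f x = n := by
  have hpos : 0 < minimalPeriod f x := hx.minimalPeriod_pos hn
  refine (hx.minimalPeriod_le hn).eq_of_not_lt fun hlt => hpos.ne' ?_
  have h : f^[minimalPeriod f x] x = f^[0] x := iterate_minimalPeriod
  simpa using @hinj ⟨_, hlt⟩ ⟨0, hn⟩ h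

end Function

namespace Monotone

variable {α : Type*} [PartialOrder α] {f : α → α}

theorem iterate_eq_of_isPeriodicPt_of_le_iterate (hf : Monotone f) {u : α} {n d : ℕ}
    (hu : IsPeriodicPt f n u) (hn : 0 < n) (hle : u ≤ f^[d] u) : f^[d] u = u := by
  have hchain : Monotone fun m => (f^[d])^[m] u := (hf.iterate d).monotone_iterate_of_le_map hle
  have hreturn : (f^[d])^[n] u = u := by rw [← iterate_mul]; exact (hu.const_mul d).eq
  refine le_antisymm ?_ hle
  simpa [hreturn] using hchain (Nat.one_le_of_lt hn)

theorem modEq_minimalPeriod_of_iterate_le (hf : Monotone f) {c : α} (hc : c ∈ periodicPts f)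
    {a b : ℕ} (hle : f^[a] c ≤ f^[b] c) : a ≡ b [MOD minimalPeriod f c] := by
  set p := minimalPeriod f c
  have hp : 0 < p := minimalPeriod_pos_of_mem_periodicPts hc
  have hb : f^[b] c = f^[b + p * a - a] (f^[a] c) := by
    rw [← iterate_add_apply,
      Nat.sub_add_cancel (Nat.le_add_left_of_le (Nat.le_mul_of_pos_left a hp)), iterate_add_apply,
      ((isPeriodicPt_minimalPeriod f c).mul_const a).eq]
  have hu : IsPeriodicPt f p (f^[a] c) := (isPeriodicPt_minimalPeriod f c).apply_iterate a
  rw [hb] at hle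
  have heq : f^[a] c = f^[b] c :=
    (hf.iterate_eq_of_isPeriodicPt_of_le_iterate hu hp hle ▸ hb).symm
  rw [← iterate_mod_minimalPeriod_eq (n := a), ← iterate_mod_minimalPeriod_eq (n := b)] at heq
  exact (iterate_eq_iterate_iff_of_lt_minimalPeriod (Nat.mod_lt _ hp) (Nat.mod_lt _ hp)).1 heq

end Monotone

theorem stmt12 {A : Type*} [PartialOrder A] (f : A → A)
    (hmono : ∀ a b : A, a ≤ b → f a ≤ f b)
    (x y : A) (h : FProhibited f x y) :
    ¬ x ≤ y ∧ ¬ y ≤ x := by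
  obtain ⟨k, l, n, hn, hkl, hinj, hcycle, hxy⟩ := h
  have hf : Monotone f := hmono
  have hiter : ∀ m, f^[m + k] x = f^[m] (f^[k] x) := fun m => iterate_add_apply f m k x
  have hc : IsPeriodicPt f n (f^[k] x) := by
    rw [IsPeriodicPt, IsFixedPt, ← hiter, add_comm, hcycle]
  have hperiod : minimalPeriod f (f^[k] x) = n :=
    minimalPeriod_eq_of_injective hc (by omega) (by simpa only [← hiter, add_comm] using hinj)
  have hcmp : ∀ {a b : ℕ}, f^[a] (f^[k] x) ≤ f^[b] (f^[k] x) → (n : ℤ) ∣ b - a :=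
    fun hle =>
      hperiod ▸ (hf.modEq_minimalPeriod_of_iterate_le (mk_mem_periodicPts (by omega) hc) hle).dvd
  have hx : f^[k + l] x = f^[l] (f^[k] x) := by rw [add_comm, hiter]
  have hy : f^[k + l] y = f^[k] (f^[k] x) := by rw [iterate_add_apply, hxy]
  constructor
  · intro hle
    exact hkl (hcmp (hx ▸ hy ▸ hf.iterate (k + l) hle))
  · intro hle
    exact hkl (dvd_sub_comm.1 (hcmp (hx ▸ hy ▸ hf.iterate (k + l) hle)))
end

section
/- If f : A → A is a function with no proper cycles (i.e., the only cyclic elements of f are fixed points), then there exists a linear order on A with respect to which f is order-preserving; in particular there is a distributive lattice structure on A making f a lattice endomorphism. -/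
/-!
Call two points equivalent when their forward orbits meet, and fix arbitrary well-orders on `A`
and on the equivalence classes. Points of different classes are compared by their classes. Two
distinct points of one class either merge, `f^[n + 1] x = f^[n + 1] y` with `f^[n] x ≠ f^[n] y`,
and are compared as `f^[n] x` and `f^[n] y`; or they never merge, and then the one that reaches
the common part of their orbits first is the smaller. The absence of proper cycles makes the
second comparison consistent: if `f^[m] x = f^[n] y` and `x`, `y` never merge, the offset `n - m`
does not depend on `m` and `n`, since otherwise the orbit of `x` would enter a cycle, which is a
fixed point and would make the two orbits merge. Applying `f` either identifies two points or
preserves how they compare, so `f` is monotone.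
-/

open Function

namespace Function

variable {A : Type*} {f : A → A} {x y z : A}

theorem iterate_eq_iterate_trans {m n p q : ℕ} (hxy : f^[m] x = f^[n] y)
    (hyz : f^[p] y = f^[q] z) : f^[p + m] x = f^[n + q] z := by
  rw [iterate_add_apply, hxy, ← iterate_add_apply, Nat.add_comm, iterate_add_apply, hyz,
    ← iterate_add_apply]

theorem iterate_eq_iterate_of_le {k n : ℕ} (e : f^[k] x = f^[k] y) (hkn : k ≤ n) :
    f^[n] x = f^[n] y := by
  obtain ⟨d, rfl⟩ := Nat.exists_eq_add_of_le hkn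
  rw [Nat.add_comm, iterate_add_apply, e, ← iterate_add_apply]

variable (f) in
def OrbitsMeet (x y : A) : Prop := ∃ m n, f^[m] x = f^[n] y

variable (f) in
def OrbitsMerge (x y : A) : Prop := ∃ n, f^[n] x = f^[n] y

theorem OrbitsMeet.symm : OrbitsMeet f x y → OrbitsMeet f y x
  | ⟨m, n, e⟩ => ⟨n, m, e.symm⟩

theorem OrbitsMeet.trans : OrbitsMeet f x y → OrbitsMeet f y z → OrbitsMeet f x z
  | ⟨_, _, e₁⟩, ⟨_, _, e₂⟩ => ⟨_, _, iterate_eq_iterate_trans e₁ e₂⟩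

theorem orbitsMeet_apply_self (x : A) : OrbitsMeet f (f x) x := ⟨0, 1, rfl⟩

theorem OrbitsMerge.symm : OrbitsMerge f x y → OrbitsMerge f y x
  | ⟨n, e⟩ => ⟨n, e.symm⟩

theorem OrbitsMerge.trans : OrbitsMerge f x y → OrbitsMerge f y z → OrbitsMerge f x z
  | ⟨m, e₁⟩, ⟨n, e₂⟩ =>
    ⟨max m n, (iterate_eq_iterate_of_le e₁ (le_max_left m n)).trans
      (iterate_eq_iterate_of_le e₂ (le_max_right m n))⟩

theorem OrbitsMerge.of_apply : OrbitsMerge f (f x) (f y) → OrbitsMerge f x y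
  | ⟨n, e⟩ => ⟨n + 1, e⟩

theorem exists_iterate_succ_eq_of_ne {n : ℕ} (hn : f^[n] x = f^[n] y) (hxy : x ≠ y) :
    ∃ k, f^[k + 1] x = f^[k + 1] y ∧ f^[k] x ≠ f^[k] y := by
  induction n with
  | zero => exact absurd hn hxy
  | succ n ih =>
    by_cases hk : f^[n] x = f^[n] y
    exacts [ih hk, ⟨n, hn, hk⟩]

variable (f) in
def orbitSetoid : Setoid A where
  r := OrbitsMeet f
  iseqv := ⟨fun _ => ⟨0, 0, rfl⟩, OrbitsMeet.symm, OrbitsMeet.trans⟩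

section NoProperCycles

variable (hf : periodicPts f ⊆ fixedPoints f)
include hf

theorem isFixedPt_iterate_of_iterate_eq {a b : ℕ} (hab : a < b) (e : f^[a] x = f^[b] x) :
    IsFixedPt f (f^[a] x) :=
  hf ⟨b - a, by omega, by
    rw [IsPeriodicPt, IsFixedPt, ← iterate_add_apply, Nat.sub_add_cancel hab.le, e]⟩

theorem OrbitsMeet.orbitsMerge_of_iterate_eq {a b : ℕ} (hxy : OrbitsMeet f x y) (hab : a < b)
    (e : f^[a] x = f^[b] x) : OrbitsMerge f x y := by
  obtain ⟨m, n, hmn⟩ := hxy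
  have hfix := isFixedPt_iterate_of_iterate_eq hf hab e
  have habsorb : ∀ k, f^[k + a] x = f^[a] x := fun k => by rw [iterate_add_apply, hfix.iterate]
  have hmeet : f^[a + m] x = f^[n + a] y := iterate_eq_iterate_trans hmn rfl
  rw [Nat.add_comm, habsorb] at hmeet
  exact ⟨n + a, (habsorb n).trans hmeet⟩

theorem add_eq_add_of_not_orbitsMerge (hxy : ¬OrbitsMerge f x y) {m n p q : ℕ}
    (e₁ : f^[m] x = f^[n] y) (e₂ : f^[p] x = f^[q] y) : m + q = n + p := by
  have hcycle : f^[q + m] x = f^[n + p] x := iterate_eq_iterate_trans e₁ e₂.symm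
  have hmeet : OrbitsMeet f x y := ⟨m, n, e₁⟩
  by_contra hne
  rcases Nat.lt_or_gt_of_ne (a := q + m) (b := n + p) (by omega) with hlt | hgt
  · exact hxy (hmeet.orbitsMerge_of_iterate_eq hf hlt hcycle)
  · exact hxy (hmeet.orbitsMerge_of_iterate_eq hf hgt hcycle.symm)

end NoProperCycles

variable (f) in
def MergeLT (x y : A) : Prop :=
  ∃ n, f^[n + 1] x = f^[n + 1] y ∧ WellOrderingRel (f^[n] x) (f^[n] y)

variable (f) in
def OrbitAhead (x y : A) : Prop :=
  ¬OrbitsMerge f x y ∧ ∃ m n, m < n ∧ f^[m] x = f^[n] y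

variable (f) in
def OrbitPrecedes (x y : A) : Prop := MergeLT f x y ∨ OrbitAhead f x y

theorem MergeLT.trans : MergeLT f x y → MergeLT f y z → MergeLT f x z := by
  rintro ⟨n₁, e₁, w₁⟩ ⟨n₂, e₂, w₂⟩
  rcases lt_trichotomy n₁ n₂ with hlt | rfl | hgt
  · refine ⟨n₂, (iterate_eq_iterate_of_le e₁ (by omega)).trans e₂, ?_⟩
    rwa [iterate_eq_iterate_of_le e₁ hlt]
  · exact ⟨n₁, e₁.trans e₂, _root_.trans w₁ w₂⟩
  · refine ⟨n₁, e₁.trans (iterate_eq_iterate_of_le e₂ (by omega)), ?_⟩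
    rwa [← iterate_eq_iterate_of_le e₂ hgt]

theorem MergeLT.orbitAhead_trans : MergeLT f x y → OrbitAhead f y z → OrbitAhead f x z := by
  rintro ⟨k, e₁, -⟩ ⟨hyz, p, q, hpq, e₂⟩
  refine ⟨fun hxz => hyz ((OrbitsMerge.symm ⟨_, e₁⟩).trans hxz), _, _, ?_,
    iterate_eq_iterate_trans e₁ e₂⟩
  omega

theorem OrbitAhead.mergeLT_trans : OrbitAhead f x y → MergeLT f y z → OrbitAhead f x z := by
  rintro ⟨hxy, m, n, hmn, e₁⟩ ⟨k, e₂, -⟩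
  refine ⟨fun hxz => hxy (hxz.trans (OrbitsMerge.symm ⟨_, e₂⟩)), _, _, ?_,
    iterate_eq_iterate_trans e₁ e₂⟩
  omega

theorem OrbitAhead.trans (hf : periodicPts f ⊆ fixedPoints f) :
    OrbitAhead f x y → OrbitAhead f y z → OrbitAhead f x z := by
  rintro ⟨hxy, m, n, hmn, e₁⟩ ⟨hyz, p, q, hpq, e₂⟩
  refine ⟨fun ⟨k, e⟩ => ?_, _, _, by omega, iterate_eq_iterate_trans e₁ e₂⟩
  have := add_eq_add_of_not_orbitsMerge hf hxy e₁ (iterate_eq_iterate_trans e e₂.symm)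
  omega

theorem OrbitPrecedes.trans (hf : periodicPts f ⊆ fixedPoints f) :
    OrbitPrecedes f x y → OrbitPrecedes f y z → OrbitPrecedes f x z := by
  rintro (h₁ | h₁) (h₂ | h₂)
  exacts [.inl (h₁.trans h₂), .inr (h₁.orbitAhead_trans h₂), .inr (h₁.mergeLT_trans h₂),
    .inr (h₁.trans hf h₂)]

theorem OrbitPrecedes.irrefl (x : A) : ¬OrbitPrecedes f x x := by
  rintro (⟨n, -, w⟩ | ⟨hxx, -⟩)
  exacts [_root_.irrefl _ w, hxx ⟨0, rfl⟩]

theorem OrbitsMeet.orbitPrecedes_or (hxy : OrbitsMeet f x y) (hne : x ≠ y) :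
    OrbitPrecedes f x y ∨ OrbitPrecedes f y x := by
  by_cases hmerge : OrbitsMerge f x y
  · obtain ⟨n, hn⟩ := hmerge
    obtain ⟨k, e, hk⟩ := exists_iterate_succ_eq_of_ne hn hne
    rcases trichotomous_of WellOrderingRel (f^[k] x) (f^[k] y) with w | e' | w
    exacts [.inl (.inl ⟨k, e, w⟩), absurd e' hk, .inr (.inl ⟨k, e.symm, w⟩)]
  · obtain ⟨m, n, e⟩ := hxy
    rcases lt_trichotomy m n with hmn | rfl | hnm
    exacts [.inl (.inr ⟨hmerge, m, n, hmn, e⟩), absurd ⟨m, e⟩ hmerge,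
      .inr (.inr ⟨fun h => hmerge h.symm, n, m, hnm, e.symm⟩)]

theorem OrbitPrecedes.apply :
    OrbitPrecedes f x y → f x = f y ∨ OrbitPrecedes f (f x) (f y) := by
  rintro (⟨_ | k, e, w⟩ | ⟨hxy, m, n, hmn, e⟩)
  · exact .inl e
  · exact .inr (.inl ⟨k, e, w⟩)
  · refine .inr (.inr ⟨fun h => hxy h.of_apply, m, n, hmn, ?_⟩)
    rw [← iterate_succ_apply, ← iterate_succ_apply, iterate_succ_apply', iterate_succ_apply', e]

variable (f) in
def orbitLT (x y : A) : Prop :=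
  WellOrderingRel (Quotient.mk (orbitSetoid f) x) (Quotient.mk _ y) ∨
    (OrbitsMeet f x y ∧ OrbitPrecedes f x y)

theorem isStrictTotalOrder_orbitLT (hf : periodicPts f ⊆ fixedPoints f) :
    IsStrictTotalOrder A (orbitLT f) where
  irrefl x := by
    rintro (w | ⟨-, h⟩)
    exacts [_root_.irrefl _ w, h.irrefl]
  trans x y z := by
    rintro (w₁ | ⟨hxy, h₁⟩) (w₂ | ⟨hyz, h₂⟩)
    · exact .inl (_root_.trans w₁ w₂)
    · exact .inl (by rwa [← Quotient.sound (s := orbitSetoid f) hyz])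
    · exact .inl (by rwa [Quotient.sound (s := orbitSetoid f) hxy])
    · exact .inr ⟨hxy.trans hyz, h₁.trans hf h₂⟩
  trichotomous x y hxy hyx := by
    by_contra hne
    rcases trichotomous_of WellOrderingRel (Quotient.mk (orbitSetoid f) x) (Quotient.mk _ y)
      with w | e | w
    · exact hxy (.inl w)
    · have hmeet : OrbitsMeet f x y := Quotient.exact e
      rcases hmeet.orbitPrecedes_or hne with h | h
      exacts [hxy (.inr ⟨hmeet, h⟩), hyx (.inr ⟨hmeet.symm, h⟩)]
    · exact hyx (.inl w)

theorem orbitLT.apply (h : orbitLT f x y) : f x = f y ∨ orbitLT f (f x) (f y) := by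
  have hclass (x : A) : Quotient.mk (orbitSetoid f) (f x) = Quotient.mk _ x :=
    Quotient.sound (orbitsMeet_apply_self x)
  rcases h with w | ⟨hxy, h⟩
  · exact .inr (.inl (by rwa [hclass, hclass]))
  · have hmeet : OrbitsMeet f (f x) (f y) :=
      (orbitsMeet_apply_self x).trans (hxy.trans (orbitsMeet_apply_self y).symm)
    exact h.apply.imp_right fun h' => .inr ⟨hmeet, h'⟩

end Function

theorem stmt14 {A : Type*} (f : A → A)
    (h : ∀ (x : A) (m : ℕ), 1 ≤ m → f^[m] x = x → f x = x) :
    (∃ L : LinearOrder A, ∀ x y : A, L.le x y → L.le (f x) (f y)) ∧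
    (∃ D : DistribLattice A,
      (∀ x y : A, f (D.sup x y) = D.sup (f x) (f y)) ∧
      (∀ x y : A, f (D.inf x y) = D.inf (f x) (f y))) := by
  classical
  have := isStrictTotalOrder_orbitLT fun x ⟨m, hm, hx⟩ => h x m hm hx
  let L : LinearOrder A := linearOrderOfSTO (orbitLT f)
  have hmono : Monotone f := fun x y hxy =>
    hxy.eq_or_lt.elim (fun e => e ▸ le_rfl) fun hlt =>
      (orbitLT.apply hlt).elim Eq.le fun h => le_of_lt h
  exact ⟨⟨L, fun _ _ => @hmono _ _⟩, ⟨inferInstance, fun _ _ => hmono.map_max,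
    fun _ _ => hmono.map_min⟩⟩
end

section
/- For a function f : A → A, there exists a lattice structure on A making f a lattice endomorphism if and only if f has no proper cycles or f has at least two fixed points. -/
/-!
If `x` lies on a proper cycle of a lattice endomorphism `f`, the join and the meet of the cycle are
fixed points, and they differ because both `x` and `f x` lie between them.

Conversely, call `x` and `y` equivalent when `f^[n] x = f^[n] y` for some `n`. Comparing `x` and `y`
in a fixed linear order at the last time their orbits differ orders every class linearly, and `f`
is monotone for it. The map induced by `f` on the classes is injective. If `f` has no proper
cycles, neither does the induced map, so the classes are linearly ordered along forward orbits
(and arbitrarily between different components); ordering `A` lexicographically, first by class,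
makes `f` monotone for a linear order. If `f` has fixed points `p ≠ q`, put the class of `p` at the
bottom with `p` on top of it, the class of `q` at the top with `q` at its bottom, and all other
classes side by side. Two incomparable elements then have join `q` and meet `p`, and `f` maps
incomparable pairs to incomparable pairs.
-/

open Function

section

variable {α β : Type*}

theorem Function.iterate_apply_eq_of_le {f : α → α} {x y : α} {m n : ℕ}
    (h : f^[m] x = f^[m] y) (hmn : m ≤ n) : f^[n] x = f^[n] y := by
  obtain ⟨d, rfl⟩ := Nat.exists_eq_add_of_le hmn
  rw [Nat.add_comm, iterate_add_apply, iterate_add_apply, h]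

theorem Function.eq_of_iterate_apply_eq_of_iterate_apply_eq {f : α → α}
    (hcyc : periodicPts f ⊆ fixedPoints f) {x y : α} {m n : ℕ}
    (hxy : f^[m] x = y) (hyx : f^[n] y = x) : x = y := by
  rcases Nat.eq_zero_or_pos m with rfl | hm
  · exact hxy
  · have hx : IsFixedPt f x :=
      hcyc ⟨n + m, by omega, by rw [IsPeriodicPt, IsFixedPt, iterate_add_apply, hxy, hyx]⟩
    rw [← hxy, iterate_fixed hx]

/-! ### Proper cycles of lattice endomorphisms -/

theorem Function.IsPeriodicPt.exists_fixedPt_upperBound [SemilatticeSup α] {f : α → α}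
    (hf : ∀ a b, f (a ⊔ b) = f a ⊔ f b) {m : ℕ} {x : α} (hx : IsPeriodicPt f m x) (hm : 0 < m) :
    ∃ s, IsFixedPt f s ∧ ∀ n, f^[n] x ≤ s := by
  have hmono : Monotone f := fun a b hab => by rw [← sup_eq_right.2 hab, hf]; exact le_sup_left
  set s := (Finset.range m).sup' ⟨0, Finset.mem_range.2 hm⟩ (f^[·] x)
  have hle (n : ℕ) : f^[n] x ≤ s :=
    hx.iterate_mod_apply n ▸ Finset.le_sup' (f^[·] x) (Finset.mem_range.2 (Nat.mod_lt n hm))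
  refine ⟨s, le_antisymm ?_ ?_, hle⟩
  · rw [show f s = _ from Finset.apply_sup'_eq_sup'_comp _ _ hf]
    exact Finset.sup'_le _ _ fun i _ => by
      simpa only [comp_apply, iterate_succ_apply'] using hle (i + 1)
  · refine Finset.sup'_le _ _ fun i _ => ?_
    calc f^[i] x = f^[i + m] x := by rw [iterate_add_apply, hx.eq]
      _ = f (f^[i + (m - 1)] x) := by rw [← iterate_succ_apply' f]; congr 1; omega
      _ ≤ f s := hmono (hle _)

theorem Function.IsPeriodicPt.exists_fixedPt_lowerBound [SemilatticeInf α] {f : α → α}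
    (hf : ∀ a b, f (a ⊓ b) = f a ⊓ f b) {m : ℕ} {x : α} (hx : IsPeriodicPt f m x) (hm : 0 < m) :
    ∃ s, IsFixedPt f s ∧ ∀ n, s ≤ f^[n] x :=
  IsPeriodicPt.exists_fixedPt_upperBound (α := αᵒᵈ) hf hx hm

theorem Function.IsPeriodicPt.exists_ne_fixedPts [Lattice α] {f : α → α}
    (hsup : ∀ a b, f (a ⊔ b) = f a ⊔ f b) (hinf : ∀ a b, f (a ⊓ b) = f a ⊓ f b) {m : ℕ} {x : α}
    (hx : IsPeriodicPt f m x) (hm : 0 < m) (hfx : ¬IsFixedPt f x) :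
    ∃ p q, p ≠ q ∧ IsFixedPt f p ∧ IsFixedPt f q := by
  obtain ⟨s, hs, hle⟩ := hx.exists_fixedPt_upperBound hsup hm
  obtain ⟨t, ht, hge⟩ := hx.exists_fixedPt_lowerBound hinf hm
  refine ⟨s, t, fun hst => hfx ?_, hs, ht⟩
  have horbit (n : ℕ) : f^[n] x = s := le_antisymm (hle n) (hst ▸ hge n)
  exact (horbit 1).trans (horbit 0).symm

/-! ### Eventually equal orbits -/

def Function.iterEqSetoid (f : α → α) : Setoid α where
  r x y := ∃ n, f^[n] x = f^[n] y
  iseqv :=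
    { refl _ := ⟨0, rfl⟩
      symm := fun ⟨n, h⟩ => ⟨n, h.symm⟩
      trans := fun ⟨m, hm⟩ ⟨n, hn⟩ =>
        ⟨max m n, (iterate_apply_eq_of_le hm (le_max_left m n)).trans
          (iterate_apply_eq_of_le hn (le_max_right m n))⟩ }

theorem Function.iterEqSetoid_apply_iff {f : α → α} {x y : α} :
    iterEqSetoid f (f x) (f y) ↔ iterEqSetoid f x y := by
  constructor
  · rintro ⟨n, h⟩
    exact ⟨n + 1, by rwa [iterate_succ_apply, iterate_succ_apply]⟩
  · rintro ⟨n, h⟩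
    exact ⟨n, by rw [← iterate_succ_apply, ← iterate_succ_apply, iterate_succ_apply',
      iterate_succ_apply', h]⟩

theorem Function.IsFixedPt.eq_of_iterEqSetoid {f : α → α} {p q : α} (hp : IsFixedPt f p)
    (hq : IsFixedPt f q) (h : iterEqSetoid f p q) : p = q := by
  obtain ⟨n, h⟩ := h
  rwa [iterate_fixed hp, iterate_fixed hq] at h

def Function.iterEqMap (f : α → α) : Quotient (iterEqSetoid f) → Quotient (iterEqSetoid f) :=
  Quotient.map f fun _ _ => iterEqSetoid_apply_iff.2

theorem Function.iterEqMap_injective (f : α → α) : Injective (iterEqMap f) := by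
  rintro ⟨x⟩ ⟨y⟩ h
  exact Quotient.sound (iterEqSetoid_apply_iff.1 (Quotient.exact h))

theorem Function.iterEqMap_iterate_mk (f : α → α) (n : ℕ) (x : α) :
    (iterEqMap f)^[n] (Quotient.mk _ x) = Quotient.mk _ (f^[n] x) :=
  ((Semiconj.iterate_right (f := Quotient.mk (iterEqSetoid f)) (fun _ => rfl) n) x).symm

theorem Function.periodicPts_iterEqMap_subset {f : α → α}
    (hcyc : periodicPts f ⊆ fixedPoints f) :
    periodicPts (iterEqMap f) ⊆ fixedPoints (iterEqMap f) := by
  rintro ⟨x⟩ ⟨m, hm, hx⟩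
  obtain ⟨n, hn⟩ := Quotient.exact ((iterEqMap_iterate_mk f m x).symm.trans hx)
  have hfix : IsFixedPt f (f^[n] x) :=
    hcyc ⟨m, hm, by rw [IsPeriodicPt, IsFixedPt, ← iterate_add_apply, Nat.add_comm,
      iterate_add_apply, hn]⟩
  exact Quotient.sound ⟨n, by rw [← iterate_succ_apply, iterate_succ_apply', hfix.eq]⟩

section OrbitColex

variable (lt : α → α → Prop) (f : α → α)

/-- Orbits that meet stay together, so `k` is the last time the orbits of `x` and `y` differ. -/
def OrbitColex (x y : α) : Prop :=
  ∃ k, lt (f^[k] x) (f^[k] y) ∧ f^[k + 1] x = f^[k + 1] y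

variable {lt f}

instance [IsStrictOrder α lt] : IsStrictOrder α (OrbitColex lt f) where
  irrefl _ := fun ⟨_, h, _⟩ => irrefl _ h
  trans x y z := by
    rintro ⟨a, ha, ha'⟩ ⟨b, hb, hb'⟩
    rcases lt_trichotomy a b with hab | rfl | hab
    · refine ⟨b, ?_, ?_⟩
      · rwa [iterate_apply_eq_of_le ha' hab]
      · rw [iterate_apply_eq_of_le ha' (by omega), hb']
    · exact ⟨a, _root_.trans ha hb, ha'.trans hb'⟩
    · refine ⟨a, ?_, ?_⟩
      · rwa [← iterate_apply_eq_of_le hb' hab]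
      · rw [ha', iterate_apply_eq_of_le hb' (by omega)]

theorem OrbitColex.apply {x y : α} (h : OrbitColex lt f x y) :
    f x = f y ∨ OrbitColex lt f (f x) (f y) := by
  obtain ⟨_ | k, hk, hk'⟩ := h
  · exact .inl hk'
  · exact .inr ⟨k, by rwa [← iterate_succ_apply], by rwa [← iterate_succ_apply]⟩

theorem exists_iterate_ne_and_succ_eq {x y : α} (h : iterEqSetoid f x y) (hxy : x ≠ y) :
    ∃ k, f^[k] x ≠ f^[k] y ∧ f^[k + 1] x = f^[k + 1] y :=
  Nat.exists_not_and_succ_of_not_zero_of_exists hxy h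

theorem orbitColex_or_orbitColex [Std.Trichotomous lt] {x y : α} (h : iterEqSetoid f x y)
    (hxy : x ≠ y) : OrbitColex lt f x y ∨ OrbitColex lt f y x := by
  obtain ⟨k, hk, hk'⟩ := exists_iterate_ne_and_succ_eq h hxy
  rcases trichotomous_of lt (f^[k] x) (f^[k] y) with h | h | h
  · exact .inl ⟨k, h, hk'⟩
  · exact absurd h hk
  · exact .inr ⟨k, h, hk'.symm⟩

theorem orbitColex_of_isLeast {q z : α} (hq : IsFixedPt f q) (hmin : ∀ w, w ≠ q → lt q w)
    (h : iterEqSetoid f z q) (hzq : z ≠ q) : OrbitColex lt f q z := by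
  obtain ⟨k, hk, hk'⟩ := exists_iterate_ne_and_succ_eq h hzq
  rw [iterate_fixed hq] at hk hk'
  exact ⟨k, by rw [iterate_fixed hq]; exact hmin _ hk, by rw [iterate_fixed hq, hk']⟩

theorem orbitColex_of_isGreatest {p z : α} (hp : IsFixedPt f p) (hmax : ∀ w, w ≠ p → lt w p)
    (h : iterEqSetoid f z p) (hzp : z ≠ p) : OrbitColex lt f z p := by
  obtain ⟨k, hk, hk'⟩ := exists_iterate_ne_and_succ_eq h hzp
  rw [iterate_fixed hp] at hk hk'
  exact ⟨k, by rw [iterate_fixed hp]; exact hmax _ hk, by rw [iterate_fixed hp, hk']⟩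

end OrbitColex

/-! ### Lexicographic orders along a key -/

section KeyLex

variable (s : β → β → Prop) (κ : α → β) (r : α → α → Prop)

abbrev KeyLex : α → α → Prop :=
  InvImage (Prod.Lex s r) fun x => (κ x, x)

variable {s κ r}

theorem keyLex_iff {x y : α} : KeyLex s κ r x y ↔ s (κ x) (κ y) ∨ κ x = κ y ∧ r x y :=
  Prod.lex_def

instance [IsStrictOrder β s] [IsStrictOrder α r] : IsStrictOrder α (KeyLex s κ r) := {}

theorem KeyLex.trichotomous [Std.Trichotomous s]
    (htot : ∀ x y, κ x = κ y → x ≠ y → r x y ∨ r y x) : Std.Trichotomous (KeyLex s κ r) where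
  trichotomous x y hxy hyx := by
    simp only [keyLex_iff, not_or, not_and] at hxy hyx
    by_contra hne
    have hκ : κ x = κ y := Std.Trichotomous.trichotomous _ _ hxy.1 hyx.1
    exact (htot x y hκ hne).elim (hxy.2 hκ) (hyx.2 hκ.symm)

theorem KeyLex.apply {g : α → α} {h : β → β} (hs : ∀ a b, s a b → s (h a) (h b))
    (hκ : ∀ x, κ (g x) = h (κ x)) (hg : ∀ x y, κ x = κ y → r x y → g x = g y ∨ r (g x) (g y))
    {x y : α} (hxy : KeyLex s κ r x y) : g x = g y ∨ KeyLex s κ r (g x) (g y) := by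
  simp only [keyLex_iff, hκ] at hxy ⊢
  rcases hxy with hxy | ⟨e, hxy⟩
  · exact .inr (.inl (hs _ _ hxy))
  · exact (hg x y e hxy).imp_right fun h' => .inr ⟨congrArg h e, h'⟩

theorem KeyLex.monotone [PartialOrder α] (hlt : ∀ x y : α, x < y ↔ KeyLex s κ r x y)
    {g : α → α} {h : β → β} (hs : ∀ a b, s a b → s (h a) (h b)) (hκ : ∀ x, κ (g x) = h (κ x))
    (hg : ∀ x y, κ x = κ y → r x y → g x = g y ∨ r (g x) (g y)) : Monotone g := by
  intro x y hxy
  rcases hxy.eq_or_lt with rfl | hxy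
  · exact le_rfl
  · rcases KeyLex.apply hs hκ hg ((hlt x y).1 hxy) with h | h
    exacts [h.le, ((hlt _ _).2 h).le]

theorem exists_linearOrder_monotone_of_key [LinearOrder β] (κ : α → β) (r : α → α → Prop)
    [IsStrictOrder α r] (htot : ∀ x y, κ x = κ y → x ≠ y → r x y ∨ r y x) {g : α → α} {h : β → β}
    (hh : StrictMono h) (hκ : ∀ x, κ (g x) = h (κ x))
    (hg : ∀ x y, κ x = κ y → r x y → g x = g y ∨ r (g x) (g y)) :
    ∃ _ : LinearOrder α, Monotone g := by
  classical
  have : IsStrictTotalOrder α (KeyLex (· < ·) κ r) := { KeyLex.trichotomous htot with }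
  let _ := linearOrderOfSTO (KeyLex (· < ·) κ r)
  exact ⟨_, KeyLex.monotone (fun _ _ => Iff.rfl) (fun _ _ hab => hh hab) hκ hg⟩

end KeyLex

/-! ### Maps without proper cycles -/

def Function.orbitMeetSetoid (f : α → α) : Setoid α where
  r x y := ∃ m n, f^[m] x = f^[n] y
  iseqv :=
    { refl _ := ⟨0, 0, rfl⟩
      symm := fun ⟨m, n, h⟩ => ⟨n, m, h.symm⟩
      trans := fun ⟨a, b, h₁⟩ ⟨c, d, h₂⟩ => ⟨c + a, b + d, by
        rw [iterate_add_apply, h₁, ← iterate_add_apply, Nat.add_comm c b, iterate_add_apply, h₂,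
          ← iterate_add_apply]⟩ }

def Function.StrictReach (f : α → α) (x y : α) : Prop :=
  x ≠ y ∧ ∃ n, f^[n] x = y

theorem Function.isStrictOrder_strictReach {f : α → α} (hcyc : periodicPts f ⊆ fixedPoints f) :
    IsStrictOrder α (StrictReach f) where
  irrefl _ h := h.1 rfl
  trans x y z := by
    rintro ⟨hxy, m, rfl⟩ ⟨-, n, rfl⟩
    refine ⟨fun hxz => hxy (eq_of_iterate_apply_eq_of_iterate_apply_eq hcyc rfl hxz.symm),
      n + m, ?_⟩
    rw [iterate_add_apply]

theorem Function.Injective.exists_linearOrder_strictMono {f : α → α} (hf : Injective f)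
    (hcyc : periodicPts f ⊆ fixedPoints f) : ∃ _ : LinearOrder α, StrictMono f := by
  classical
  let _ : LinearOrder (Quotient (orbitMeetSetoid f)) := IsWellOrder.linearOrder WellOrderingRel
  have := isStrictOrder_strictReach hcyc
  have htot (x y : α) (hxy : Quotient.mk (orbitMeetSetoid f) x = Quotient.mk _ y) (hne : x ≠ y) :
      StrictReach f x y ∨ StrictReach f y x := by
    obtain ⟨m, n, h⟩ := Quotient.exact hxy
    rcases le_total m n with hmn | hnm
    · rw [← Nat.add_sub_cancel' hmn, iterate_add_apply] at h
      exact .inr ⟨hne.symm, n - m, (hf.iterate m h).symm⟩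
    · rw [← Nat.add_sub_cancel' hnm, iterate_add_apply] at h
      exact .inl ⟨hne, m - n, hf.iterate n h⟩
  obtain ⟨_, hmono⟩ := exists_linearOrder_monotone_of_key (g := f) (Quotient.mk _) (StrictReach f)
    htot strictMono_id (fun x => Quotient.sound ⟨0, 1, rfl⟩) fun x y _ ⟨_, n, hn⟩ =>
      .inr ⟨hf.ne ‹_›, n, by rw [← iterate_succ_apply, iterate_succ_apply', hn]⟩
  exact ⟨_, hmono.strictMono_of_injective hf⟩

theorem Function.exists_linearOrder_monotone {f : α → α} (hcyc : periodicPts f ⊆ fixedPoints f) :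
    ∃ _ : LinearOrder α, Monotone f := by
  obtain ⟨_, hF⟩ := (iterEqMap_injective f).exists_linearOrder_strictMono
    (periodicPts_iterEqMap_subset hcyc)
  exact exists_linearOrder_monotone_of_key (Quotient.mk _) (OrbitColex WellOrderingRel f)
    (fun x y hxy => orbitColex_or_orbitColex (Quotient.exact hxy)) hF (fun _ => rfl)
    fun _ _ _ h => h.apply

/-! ### Maps with two fixed points -/

theorem exists_isStrictTotalOrder_least_greatest {p q : α} (h : p ≠ q) :
    ∃ lt : α → α → Prop, IsStrictTotalOrder α lt ∧ (∀ z, z ≠ q → lt q z) ∧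
      ∀ z, z ≠ p → lt z p := by
  classical
  let rank (z : α) : ℕ := if z = q then 0 else if z = p then 2 else 1
  let lt := InvImage (Prod.Lex (· < ·) WellOrderingRel) fun z => (rank z, z)
  have : IsStrictOrder α lt := {}
  refine ⟨lt, { InvImage.trichotomous fun _ _ h => congrArg Prod.snd h with },
    fun z hz => .left _ _ ?_, fun z hz => .left _ _ ?_⟩ <;>
  simp only [rank] <;> split_ifs <;> simp_all

noncomputable abbrev latticeOfIncomp [PartialOrder α] (p q : α)
    (hq : ∀ x y, ¬x ≤ y → ¬y ≤ x → IsLUB {x, y} q)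
    (hp : ∀ x y, ¬x ≤ y → ¬y ≤ x → IsGLB {x, y} p) : Lattice α := by
  classical
  exact
  { sup x y := if x ≤ y then y else if y ≤ x then x else q
    le_sup_left x y := by
      split_ifs with h₁ h₂
      exacts [h₁, le_rfl, (hq x y h₁ h₂).1 (Set.mem_insert x _)]
    le_sup_right x y := by
      split_ifs with h₁ h₂
      exacts [le_rfl, h₂, (hq x y h₁ h₂).1 (Set.mem_insert_of_mem x rfl)]
    sup_le x y z hxz hyz := by
      split_ifs with h₁ h₂
      exacts [hyz, hxz, (hq x y h₁ h₂).2 (by rintro _ (rfl | rfl) <;> assumption)]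
    inf x y := if x ≤ y then x else if y ≤ x then y else p
    inf_le_left x y := by
      split_ifs with h₁ h₂
      exacts [le_rfl, h₂, (hp x y h₁ h₂).1 (Set.mem_insert x _)]
    inf_le_right x y := by
      split_ifs with h₁ h₂
      exacts [h₁, le_rfl, (hp x y h₁ h₂).1 (Set.mem_insert_of_mem x rfl)]
    le_inf x y z hzx hzy := by
      split_ifs with h₁ h₂
      exacts [hzx, hzy, (hp y z h₁ h₂).2 (by rintro _ (rfl | rfl) <;> assumption)] }

theorem map_sup_of_incomp [Lattice α] {f : α → α} {q : α} (hf : Monotone f) (hfq : f q = q)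
    (hq : ∀ x y, ¬x ≤ y → ¬y ≤ x → x ⊔ y = q)
    (hinc : ∀ x y, ¬x ≤ y → ¬y ≤ x → ¬f x ≤ f y ∧ ¬f y ≤ f x) (x y : α) :
    f (x ⊔ y) = f x ⊔ f y := by
  by_cases hxy : x ≤ y
  · rw [sup_eq_right.2 hxy, sup_eq_right.2 (hf hxy)]
  by_cases hyx : y ≤ x
  · rw [sup_eq_left.2 hyx, sup_eq_left.2 (hf hyx)]
  obtain ⟨h₁, h₂⟩ := hinc x y hxy hyx
  rw [hq x y hxy hyx, hfq, hq _ _ h₁ h₂]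

theorem map_inf_of_incomp [Lattice α] {f : α → α} {p : α} (hf : Monotone f) (hfp : f p = p)
    (hp : ∀ x y, ¬x ≤ y → ¬y ≤ x → x ⊓ y = p)
    (hinc : ∀ x y, ¬x ≤ y → ¬y ≤ x → ¬f x ≤ f y ∧ ¬f y ≤ f x) (x y : α) :
    f (x ⊓ y) = f x ⊓ f y :=
  map_sup_of_incomp (α := αᵒᵈ) hf.dual hfp (fun x y h₁ h₂ => hp x y h₂ h₁)
    (fun x y h₁ h₂ => (hinc x y h₂ h₁).symm) x y

section BoundedAntichain

variable {bot top : β}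

def BoundedAntichainLT (bot top : β) (a b : β) : Prop :=
  a ≠ b ∧ (a = bot ∨ b = top)

theorem isStrictOrder_boundedAntichainLT (h : bot ≠ top) :
    IsStrictOrder β (BoundedAntichainLT bot top) where
  irrefl _ h := h.1 rfl
  trans _ _ _ := by unfold BoundedAntichainLT; grind

theorem BoundedAntichainLT.map {h : β → β} (hh : Injective h) (hbot : h bot = bot)
    (htop : h top = top) {a b : β} (hab : BoundedAntichainLT bot top a b) :
    BoundedAntichainLT bot top (h a) (h b) :=
  ⟨hh.ne hab.1, hab.2.imp (fun ha => by rw [ha, hbot]) fun hb => by rw [hb, htop]⟩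

theorem keyLex_boundedAntichainLT_swap {κ : α → β} {r : α → α → Prop} {x y : α} :
    KeyLex (BoundedAntichainLT bot top) κ r y x ↔
      KeyLex (BoundedAntichainLT top bot) κ (flip r) x y := by
  simp only [keyLex_iff, BoundedAntichainLT, flip, ne_comm, eq_comm (a := κ y)]
  tauto

variable [PartialOrder α] {κ : α → β} {r : α → α → Prop}

theorem incomp_iff_of_keyLex_boundedAntichainLT
    (hlt : ∀ x y : α, x < y ↔ KeyLex (BoundedAntichainLT bot top) κ r x y)
    (htot : ∀ x y, κ x = κ y → x ≠ y → r x y ∨ r y x) {x y : α} :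
    ¬x ≤ y ∧ ¬y ≤ x ↔ κ x ≠ κ y ∧ κ x ∉ ({bot, top} : Set β) ∧ κ y ∉ ({bot, top} : Set β) := by
  simp only [le_iff_eq_or_lt, hlt, keyLex_iff, BoundedAntichainLT, Set.mem_insert_iff,
    Set.mem_singleton_iff]
  grind

theorem isLUB_pair_of_keyLex_boundedAntichainLT
    (hlt : ∀ x y : α, x < y ↔ KeyLex (BoundedAntichainLT bot top) κ r x y)
    (htot : ∀ x y, κ x = κ y → x ≠ y → r x y ∨ r y x) {q : α} (hq : κ q = top)
    (hqmin : ∀ z, κ z = top → q ≤ z) {x y : α} (hxy : ¬x ≤ y) (hyx : ¬y ≤ x) :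
    IsLUB {x, y} q := by
  obtain ⟨hne, hx, hy⟩ := (incomp_iff_of_keyLex_boundedAntichainLT hlt htot).1 ⟨hxy, hyx⟩
  have le_q {a : α} (ha : κ a ∉ ({bot, top} : Set β)) : a ≤ q :=
    ((hlt a q).2 (keyLex_iff.2 (.inl ⟨hq ▸ fun e => ha (.inr e), .inr hq⟩))).le
  have key_eq {a z : α} (ha : κ a ∉ ({bot, top} : Set β)) (hz : κ z ≠ top) (haz : a ≤ z) :
      κ a = κ z := by
    rcases haz.eq_or_lt with rfl | haz
    · rfl
    rw [hlt, keyLex_iff] at haz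
    simp only [BoundedAntichainLT, Set.mem_insert_iff, Set.mem_singleton_iff] at haz ha
    tauto
  refine ⟨by rintro a (rfl | rfl); exacts [le_q hx, le_q hy], fun z hz => ?_⟩
  by_cases hzt : κ z = top
  · exact hqmin z hzt
  · exact absurd ((key_eq hx hzt (hz (.inl rfl))).trans (key_eq hy hzt (hz (.inr rfl))).symm) hne

theorem isGLB_pair_of_keyLex_boundedAntichainLT
    (hlt : ∀ x y : α, x < y ↔ KeyLex (BoundedAntichainLT bot top) κ r x y)
    (htot : ∀ x y, κ x = κ y → x ≠ y → r x y ∨ r y x) {p : α} (hp : κ p = bot)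
    (hpmax : ∀ z, κ z = bot → z ≤ p) {x y : α} (hxy : ¬x ≤ y) (hyx : ¬y ≤ x) :
    IsGLB {x, y} p :=
  isLUB_pair_of_keyLex_boundedAntichainLT (α := αᵒᵈ) (κ := κ) (r := flip r)
    (fun x y => (hlt y x).trans keyLex_boundedAntichainLT_swap)
    (fun x y e hne => (htot x y e hne).symm) hp hpmax hyx hxy

theorem incomp_apply_of_keyLex_boundedAntichainLT
    (hlt : ∀ x y : α, x < y ↔ KeyLex (BoundedAntichainLT bot top) κ r x y)
    (htot : ∀ x y, κ x = κ y → x ≠ y → r x y ∨ r y x) {g : α → α} {h : β → β} (hh : Injective h)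
    (hbot : h bot = bot) (htop : h top = top) (hκ : ∀ x, κ (g x) = h (κ x)) {x y : α}
    (hxy : ¬x ≤ y) (hyx : ¬y ≤ x) : ¬g x ≤ g y ∧ ¬g y ≤ g x := by
  obtain ⟨hne, hx, hy⟩ := (incomp_iff_of_keyLex_boundedAntichainLT hlt htot).1 ⟨hxy, hyx⟩
  have hmid {a : β} (ha : a ∉ ({bot, top} : Set β)) : h a ∉ ({bot, top} : Set β) := by
    rwa [← hbot, ← htop, ← Set.image_pair, hh.mem_set_image]
  rw [incomp_iff_of_keyLex_boundedAntichainLT hlt htot, hκ, hκ]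
  exact ⟨hh.ne hne, hmid hx, hmid hy⟩

end BoundedAntichain

theorem Function.exists_lattice_of_fixedPts {f : α → α} {p q : α} (hpq : p ≠ q)
    (hp : IsFixedPt f p) (hq : IsFixedPt f q) :
    ∃ _ : Lattice α, (∀ x y, f (x ⊔ y) = f x ⊔ f y) ∧ ∀ x y, f (x ⊓ y) = f x ⊓ f y := by
  obtain ⟨lt, _, hmin, hmax⟩ := exists_isStrictTotalOrder_least_greatest hpq
  let κ := Quotient.mk (iterEqSetoid f)
  have := isStrictOrder_boundedAntichainLT fun h : κ p = κ q =>
    hpq (hp.eq_of_iterEqSetoid hq (Quotient.exact h))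
  let _ : PartialOrder α :=
    partialOrderOfSO (KeyLex (BoundedAntichainLT (κ p) (κ q)) κ (OrbitColex lt f))
  have hlt (x y : α) : x < y ↔ KeyLex (BoundedAntichainLT (κ p) (κ q)) κ (OrbitColex lt f) x y :=
    Iff.rfl
  have htot (x y : α) (h : κ x = κ y) := orbitColex_or_orbitColex (lt := lt) (Quotient.exact h)
  have hpmax (z : α) (hz : κ z = κ p) : z ≤ p :=
    (eq_or_ne z p).elim (fun h => h.le) fun h => .inr (keyLex_iff.2 (.inr
      ⟨hz, orbitColex_of_isGreatest hp hmax (Quotient.exact hz) h⟩))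
  have hqmin (z : α) (hz : κ z = κ q) : q ≤ z :=
    (eq_or_ne z q).elim (fun h => h.ge) fun h => .inr (keyLex_iff.2 (.inr
      ⟨hz.symm, orbitColex_of_isLeast hq hmin (Quotient.exact hz) h⟩))
  have hp' : iterEqMap f (κ p) = κ p := congrArg κ hp
  have hq' : iterEqMap f (κ q) = κ q := congrArg κ hq
  have hmono : Monotone f := KeyLex.monotone hlt
    (fun _ _ => BoundedAntichainLT.map (iterEqMap_injective f) hp' hq') (fun _ => rfl)
    fun _ _ _ h => h.apply
  have hinc (x y : α) (hxy : ¬x ≤ y) (hyx : ¬y ≤ x) : ¬f x ≤ f y ∧ ¬f y ≤ f x :=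
    incomp_apply_of_keyLex_boundedAntichainLT hlt htot (iterEqMap_injective f) hp' hq'
      (fun _ => rfl) hxy hyx
  let _ := latticeOfIncomp p q
    (fun _ _ => isLUB_pair_of_keyLex_boundedAntichainLT hlt htot rfl hqmin)
    (fun _ _ => isGLB_pair_of_keyLex_boundedAntichainLT hlt htot rfl hpmax)
  exact ⟨_, map_sup_of_incomp hmono hq (fun _ _ h₁ h₂ => (if_neg h₁).trans (if_neg h₂)) hinc,
    map_inf_of_incomp hmono hp (fun _ _ h₁ h₂ => (if_neg h₁).trans (if_neg h₂)) hinc⟩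

end

theorem stmt16 {A : Type*} (f : A → A) :
    (∃ L : Lattice A,
      (∀ x y : A, f (L.sup x y) = L.sup (f x) (f y)) ∧
      (∀ x y : A, f (L.inf x y) = L.inf (f x) (f y))) ↔
    ((∀ (x : A) (m : ℕ), 1 ≤ m → f^[m] x = x → f x = x) ∨
      ∃ p q : A, p ≠ q ∧ f p = p ∧ f q = q) := by
  constructor
  · rintro ⟨L, hsup, hinf⟩
    refine or_iff_not_imp_left.2 fun hcyc => ?_
    push Not at hcyc
    obtain ⟨x, m, hm, hx, hfx⟩ := hcyc
    exact IsPeriodicPt.exists_ne_fixedPts hsup hinf hx hm hfx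
  · rintro (hcyc | ⟨p, q, hpq, hp, hq⟩)
    · obtain ⟨_, hf⟩ := exists_linearOrder_monotone fun x ⟨m, hm, hx⟩ => hcyc x m hm hx
      exact ⟨inferInstance, fun _ _ => hf.map_max, fun _ _ => hf.map_min⟩
    · exact exists_lattice_of_fixedPts hpq hp hq
end

section
/- Let A = {p, q, x₁, …, xₙ} with n ≥ 3 distinct elements, and f : A → A defined by f(p) = p, f(q) = q, f(xᵢ) = xᵢ₊₁ for 1 ≤ i ≤ n−1, and f(xₙ) = x₁. Then there is no distributive lattice structure on A making f a lattice endomorphism. -/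
/-!
A lattice endomorphism is monotone, and a monotone map cannot move a point of a finite periodic
orbit strictly upward: `a ≤ fᵏ a` gives `a ≤ fᵏ a ≤ f²ᵏ a ≤ ⋯ ≤ fⁿᵏ a = a`. Hence the cycle
`x₁, …, xₙ` is an antichain, so the join and the meet of two distinct `xᵢ` lie in `{p, q}` and are
fixed by `f`. Applying `f` to `x₁ ⊔ x₂` and `x₁ ⊓ x₂` shows that `x₁` and `x₃` have the same join
and the same meet with `x₂`, which in a distributive lattice forces `x₁ = x₃`.
-/

open Function Set

theorem Monotone.iterate_eq_self_of_le_of_isPeriodicPt {α : Type*} [PartialOrder α]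
    {f : α → α} (hf : Monotone f) {a : α} {k n : ℕ} (hn : 0 < n) (ha : IsPeriodicPt f n a)
    (hle : a ≤ f^[k] a) : f^[k] a = a := by
  have hchain : Monotone fun m => (f^[k])^[m] a := (hf.iterate k).monotone_iterate_of_le_map hle
  refine le_antisymm ?_ hle
  calc f^[k] a = (f^[k])^[1] a := rfl
    _ ≤ (f^[k])^[n] a := hchain hn
    _ = a := ha.iterate k

section CyclicOrbit

open Fin.NatCast

variable {α : Type*} {n : ℕ} [NeZero n] {f : α → α} {x : Fin n → α}

theorem iterate_apply_of_forall_apply_eq_add_one (hx : ∀ i, f (x i) = x (i + 1)) (k : ℕ)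
    (i : Fin n) : f^[k] (x i) = x (i + (k : Fin n)) := by
  induction k generalizing i with
  | zero => simp
  | succ k ih => rw [iterate_succ_apply', ih, hx, Nat.cast_succ, add_assoc]

theorem isAntichain_range_of_forall_apply_eq_add_one [PartialOrder α] (hf : Monotone f)
    (hx : ∀ i, f (x i) = x (i + 1)) : IsAntichain (· ≤ ·) (range x) := by
  rintro _ ⟨i, rfl⟩ _ ⟨j, rfl⟩ hne hle
  have hperiodic : IsPeriodicPt f n (x i) := by
    rw [IsPeriodicPt, IsFixedPt, iterate_apply_of_forall_apply_eq_add_one hx, Fin.natCast_self,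
      add_zero]
  have hj : f^[(j - i).val] (x i) = x j := by
    rw [iterate_apply_of_forall_apply_eq_add_one hx, Fin.cast_val_eq_self, add_sub_cancel]
  rw [← hj] at hle hne
  exact hne (hf.iterate_eq_self_of_le_of_isPeriodicPt (NeZero.pos n) hperiodic hle).symm

end CyclicOrbit

theorem IsAntichain.sup_notMem {α : Type*} [Lattice α] {s : Set α}
    (hs : IsAntichain (· ≤ ·) s) {a b : α} (ha : a ∈ s) (hb : b ∈ s) (hab : a ≠ b) :
    a ⊔ b ∉ s := fun h =>
  hab ((hs.eq ha h le_sup_left).trans (hs.eq hb h le_sup_right).symm)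

theorem IsAntichain.inf_notMem {α : Type*} [Lattice α] {s : Set α}
    (hs : IsAntichain (· ≤ ·) s) {a b : α} (ha : a ∈ s) (hb : b ∈ s) (hab : a ≠ b) :
    a ⊓ b ∉ s := fun h =>
  hab ((hs.eq h ha inf_le_left).symm.trans (hs.eq h hb inf_le_right))

theorem stmt17 {A : Type*} (n : ℕ) (hn : 3 ≤ n) (p q : A) (x : Fin n → A)
    (hinj : Function.Injective x)
    (hcover : ∀ a : A, a = p ∨ a = q ∨ ∃ i : Fin n, a = x i)
    (f : A → A) (hp : f p = p) (hq : f q = q)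
    (hx : ∀ i : Fin n, f (x i) = x (i + ⟨1, by omega⟩)) :
    ¬ ∃ D : DistribLattice A,
      (∀ a b : A, f (D.sup a b) = D.sup (f a) (f b)) ∧
      (∀ a b : A, f (D.inf a b) = D.inf (f a) (f b)) := by
  rintro ⟨D, hsup, hinf⟩
  have hsup : ∀ a b : A, f (a ⊔ b) = f a ⊔ f b := hsup
  have hinf : ∀ a b : A, f (a ⊓ b) = f a ⊓ f b := hinf
  have : NeZero n := ⟨by omega⟩
  have hx1 : ∀ i, f (x i) = x (i + 1) := by
    convert hx using 4; ext; simp [Nat.mod_eq_of_lt (by omega : 1 < n)]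
  have hanti : IsAntichain (· ≤ ·) (range x) :=
    isAntichain_range_of_forall_apply_eq_add_one (OrderHomClass.mono (⟨f, hsup⟩ : SupHom A A)) hx1
  have hfix : ∀ a ∉ range x, f a = a := by
    intro a ha
    rcases hcover a with rfl | rfl | ⟨i, rfl⟩
    exacts [hp, hq, absurd (mem_range_self i) ha]
  have h01 : x 0 ≠ x 1 := hinj.ne (by simp [Fin.ext_iff, Nat.mod_eq_of_lt (by omega : 1 < n)])
  have hsup' : x 0 ⊔ x 1 = x (1 + 1) ⊔ x 1 := by
    rw [← hfix _ (hanti.sup_notMem (mem_range_self 0) (mem_range_self 1) h01), hsup, hx1, hx1,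
      zero_add, sup_comm]
  have hinf' : x 0 ⊓ x 1 = x (1 + 1) ⊓ x 1 := by
    rw [← hfix _ (hanti.inf_notMem (mem_range_self 0) (mem_range_self 1) h01), hinf, hx1, hx1,
      zero_add, inf_comm]
  have h02 := hinj (eq_of_inf_eq_sup_eq hinf' hsup')
  simp [Fin.ext_iff, Fin.val_add, Nat.mod_eq_of_lt (by omega : 1 < n),
    Nat.mod_eq_of_lt (by omega : 2 < n)] at h02
end
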